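/- arXiv:1004.3625 — 2 statements merged into one kernel-verified Lean document; each statement's English description precedes it below -/
import Mathlib

section
/- Let u(x) = exp(Σ_{k≥1} (u_k/k) x^k) with 0 ≤ u_k ≤ A. Then there is a constant C = C(A) such that for all j ≥ 1: ∫_0^1 x^{j−1}/u(x) dx ≤ C/(j·u(e^{-1/j})). -/
/-!
Write `u(x) = exp (logSeries u x)`. Since `0 ≤ u_k ≤ A`, the exponent is nondecreasing on `[0, 1)`
and grows at most like `-A log (1 - x)`, so `u(y) / u(x) ≤ ((1 - x) / (1 - y)) ^ A` for `x ≤ y`.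
For `y = e^{-1/j}` we have `1 - y ≥ 1 / (2j)`, hence for all `x ∈ [0, 1)`
`u(y) / u(x) ≤ 1 + (2j)^A (1 - x)^A`, and the integral is at most
`(1/j + (2j)^A B(j, A + 1)) / u(y)`. The Beta integral is `O(Γ(A + 1) / j^{A + 1})`
because `(1 - t)^{j - 1} ≤ e · e^{-jt}` on `[0, 1]`.
-/

open MeasureTheory Set Real intervalIntegral

lemma div_one_add_le_one_sub_exp_neg {t : ℝ} (ht : 0 ≤ t) : t / (1 + t) ≤ 1 - exp (-t) := by
  have h : exp (-t) ≤ 1 / (1 + t) := by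
    rw [exp_neg, ← one_div]
    exact one_div_le_one_div_of_le (by positivity) (by linarith [add_one_le_exp t])
  calc t / (1 + t) = 1 - 1 / (1 + t) := by field_simp; ring
    _ ≤ 1 - exp (-t) := by linarith

lemma integral_pow_mul_one_sub_rpow_le {A : ℝ} (hA : -1 < A) (n : ℕ) :
    ∫ x in (0 : ℝ)..1, x ^ n * (1 - x) ^ A ≤ exp 1 * Gamma (A + 1) / ((n : ℝ) + 1) ^ (A + 1) := by
  have hn : (0 : ℝ) < n + 1 := by positivity
  have hint : IntegrableOn (fun t : ℝ => t ^ A * exp (-((n + 1) * t))) (Ioi 0) := by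
    refine (integrableOn_rpow_mul_exp_neg_mul_rpow hA one_pos hn).congr_fun
      (fun t _ => ?_) measurableSet_Ioi
    simp only [rpow_one, neg_mul]
  have hΓ : ∫ t in Ioi (0 : ℝ), t ^ A * exp (-((n + 1) * t))
      = (1 / (n + 1)) ^ (A + 1) * Gamma (A + 1) := by
    simpa using integral_rpow_mul_exp_neg_mul_Ioi (a := A + 1) (by linarith) hn
  have hpt : ∀ t ∈ Icc (0 : ℝ) 1,
      (1 - t) ^ n * t ^ A ≤ exp 1 * (t ^ A * exp (-((n + 1) * t))) := by
    rintro t ⟨ht₀, ht₁⟩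
    have : (1 - t) ^ n ≤ exp 1 * exp (-((n + 1) * t)) :=
      calc (1 - t) ^ n ≤ exp (-t) ^ n :=
            pow_le_pow_left₀ (by linarith) (by linarith [add_one_le_exp (-t)]) n
        _ = exp (t + -((n + 1) * t)) := by rw [← exp_nat_mul]; ring_nf
        _ ≤ exp 1 * exp (-((n + 1) * t)) := by rw [exp_add]; gcongr
    calc (1 - t) ^ n * t ^ A ≤ exp 1 * exp (-((n + 1) * t)) * t ^ A :=
          mul_le_mul_of_nonneg_right this (rpow_nonneg ht₀ A)
      _ = _ := by ring
  calc ∫ x in (0 : ℝ)..1, x ^ n * (1 - x) ^ A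
      = ∫ t in (0 : ℝ)..1, (1 - t) ^ n * t ^ A := by
        simpa using integral_comp_sub_left (a := 0) (b := 1) (fun t : ℝ => (1 - t) ^ n * t ^ A) 1
    _ ≤ ∫ t in (0 : ℝ)..1, exp 1 * (t ^ A * exp (-((n + 1) * t))) := by
        refine integral_mono_on zero_le_one ?_ ?_ hpt
        · exact (intervalIntegrable_rpow' hA).continuousOn_mul (by fun_prop)
        · exact ((intervalIntegrable_iff_integrableOn_Ioc_of_le zero_le_one).2
            (hint.mono_set Ioc_subset_Ioi_self)).const_mul _
    _ ≤ exp 1 * ∫ t in Ioi (0 : ℝ), t ^ A * exp (-((n + 1) * t)) := by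
        rw [intervalIntegral.integral_const_mul, integral_of_le zero_le_one]
        gcongr
        · filter_upwards [self_mem_ae_restrict measurableSet_Ioi] with t ht
          exact mul_nonneg (rpow_nonneg ht.le A) (exp_nonneg _)
        · exact Ioc_subset_Ioi_self
    _ = exp 1 * Gamma (A + 1) / ((n : ℝ) + 1) ^ (A + 1) := by
        rw [hΓ, div_rpow zero_le_one hn.le, one_rpow]; ring

/-- `∑_{k ≥ 1} u_k x^k / k`, with the summation index shifted to start at `0`. -/
noncomputable def logSeries (u : ℕ → ℝ) (x : ℝ) : ℝ :=
  ∑' k : ℕ, u (k + 1) * x ^ (k + 1) / ((k : ℝ) + 1)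

section logSeries

variable {u : ℕ → ℝ} {A x y : ℝ}

lemma summable_logSeries (hu₀ : ∀ k, 0 ≤ u (k + 1)) (huA : ∀ k, u (k + 1) ≤ A) (hx₀ : 0 ≤ x)
    (hx₁ : x < 1) : Summable fun k : ℕ => u (k + 1) * x ^ (k + 1) / ((k : ℝ) + 1) := by
  refine Summable.of_nonneg_of_le (fun k => by have := hu₀ k; positivity) (fun k => ?_)
    ((hasSum_pow_div_log_of_abs_lt_one (abs_lt.2 ⟨by linarith, hx₁⟩)).summable.mul_left A)
  rw [mul_div_assoc]
  exact mul_le_mul_of_nonneg_right (huA k) (by positivity)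

lemma monotoneOn_logSeries (hu₀ : ∀ k, 0 ≤ u (k + 1)) (huA : ∀ k, u (k + 1) ≤ A) :
    MonotoneOn (logSeries u) (Ico 0 1) := by
  rintro x ⟨hx₀, hx₁⟩ y ⟨hy₀, hy₁⟩ hxy
  refine Summable.tsum_le_tsum (fun k => ?_) (summable_logSeries hu₀ huA hx₀ hx₁)
    (summable_logSeries hu₀ huA hy₀ hy₁)
  have := hu₀ k
  gcongr

lemma logSeries_sub_le (hu₀ : ∀ k, 0 ≤ u (k + 1)) (huA : ∀ k, u (k + 1) ≤ A) (hx₀ : 0 ≤ x)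
    (hxy : x ≤ y) (hy₁ : y < 1) :
    logSeries u y - logSeries u x ≤ A * log ((1 - x) / (1 - y)) := by
  have hx₁ : x < 1 := hxy.trans_lt hy₁
  have hsx := summable_logSeries hu₀ huA hx₀ hx₁
  have hsy := summable_logSeries hu₀ huA (hx₀.trans hxy) hy₁
  have hL (z : ℝ) (hz₀ : 0 ≤ z) (hz₁ : z < 1) :=
    hasSum_pow_div_log_of_abs_lt_one (abs_lt.2 ⟨by linarith, hz₁⟩)
  have hR := ((hL y (hx₀.trans hxy) hy₁).sub (hL x hx₀ hx₁)).mul_left A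
  rw [log_div (by linarith) (by linarith),
    show log (1 - x) - log (1 - y) = -log (1 - y) - -log (1 - x) by ring, ← hR.tsum_eq,
    logSeries, logSeries, ← hsy.tsum_sub hsx]
  refine Summable.tsum_le_tsum (fun k => ?_) (hsy.sub hsx) hR.summable
  have : x ^ (k + 1) ≤ y ^ (k + 1) := pow_le_pow_left₀ hx₀ hxy _
  rw [← sub_div, ← sub_div, ← mul_sub, mul_div_assoc]
  exact mul_le_mul_of_nonneg_right (huA k) (div_nonneg (by linarith) (by positivity))

lemma exp_logSeries_le_mul (hu₀ : ∀ k, 0 ≤ u (k + 1)) (huA : ∀ k, u (k + 1) ≤ A) (hx₀ : 0 ≤ x)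
    (hx₁ : x < 1) (hy₀ : 0 ≤ y) (hy₁ : y < 1) :
    exp (logSeries u y) ≤ exp (logSeries u x) * (1 + ((1 - x) / (1 - y)) ^ A) := by
  have hq : 0 < (1 - x) / (1 - y) := div_pos (by linarith) (by linarith)
  have hqA := rpow_nonneg hq.le A
  rcases le_total x y with hxy | hyx
  · calc exp (logSeries u y) = exp (logSeries u x) * exp (logSeries u y - logSeries u x) := by
          rw [← exp_add, add_sub_cancel]
      _ ≤ exp (logSeries u x) * ((1 - x) / (1 - y)) ^ A := by
          rw [rpow_def_of_pos hq, mul_comm (log _)]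
          gcongr
          exact logSeries_sub_le hu₀ huA hx₀ hxy hy₁
      _ ≤ _ := by gcongr; linarith
  · calc exp (logSeries u y) ≤ exp (logSeries u x) :=
          exp_le_exp.2 (monotoneOn_logSeries hu₀ huA ⟨hy₀, hy₁⟩ ⟨hx₀, hx₁⟩ hyx)
      _ ≤ _ := le_mul_of_one_le_right (exp_pos _).le (by linarith)

lemma pow_div_exp_logSeries_le (hu₀ : ∀ k, 0 ≤ u (k + 1)) (huA : ∀ k, u (k + 1) ≤ A) (n : ℕ)
    (hx : x ∈ Ioo 0 1) :
    x ^ n / exp (logSeries u x) ≤ (x ^ n + (2 * (n + 1)) ^ A * (x ^ n * (1 - x) ^ A)) /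
      exp (logSeries u (exp (-1 / ((n : ℝ) + 1)))) := by
  obtain ⟨hx₀, hx₁⟩ := hx
  have hA : 0 ≤ A := (hu₀ 0).trans (huA 0)
  set y := exp (-1 / ((n : ℝ) + 1))
  have hy : 1 / (n + 2) ≤ 1 - y := by
    convert div_one_add_le_one_sub_exp_neg (t := 1 / (n + 1)) (by positivity) using 1
    · field_simp; ring
    · simp only [y, neg_div]
  have hy₁ : 0 < 1 - y := lt_of_lt_of_le (by positivity) hy
  have hq : ((1 - x) / (1 - y)) ^ A ≤ (2 * (n + 1)) ^ A * (1 - x) ^ A := by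
    rw [div_eq_mul_inv, mul_comm, mul_rpow (inv_nonneg.2 hy₁.le) (by linarith)]
    gcongr
    rw [inv_le_comm₀ hy₁ (by positivity)]
    refine le_trans ?_ hy
    rw [inv_eq_one_div]
    gcongr
    linarith
  rw [div_le_div_iff₀ (exp_pos _) (exp_pos _)]
  calc x ^ n * exp (logSeries u y)
      ≤ x ^ n * (exp (logSeries u x) * (1 + ((1 - x) / (1 - y)) ^ A)) := by
        gcongr
        exact exp_logSeries_le_mul hu₀ huA hx₀.le hx₁ (exp_pos _).le (by linarith)
    _ ≤ x ^ n * (exp (logSeries u x) * (1 + (2 * (n + 1)) ^ A * (1 - x) ^ A)) := by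
        gcongr
    _ = _ := by ring

theorem integral_pow_div_exp_logSeries_le (hu₀ : ∀ k, 0 ≤ u (k + 1))
    (huA : ∀ k, u (k + 1) ≤ A) (n : ℕ) :
    ∫ x in (0 : ℝ)..1, x ^ n / exp (logSeries u x) ≤ (1 + 2 ^ A * exp 1 * Gamma (A + 1)) /
      (((n : ℝ) + 1) * exp (logSeries u (exp (-1 / ((n : ℝ) + 1))))) := by
  have hA : 0 ≤ A := (hu₀ 0).trans (huA 0)
  have hn : (0 : ℝ) < n + 1 := by positivity
  set E := exp (logSeries u (exp (-1 / ((n : ℝ) + 1))))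
  have hB : Continuous fun x : ℝ => x ^ n * (1 - x) ^ A := by
    fun_prop (disch := exact fun _ => Or.inr hA)
  by_cases hint : IntervalIntegrable (fun x => x ^ n / exp (logSeries u x)) volume 0 1
  swap
  · rw [intervalIntegral.integral_undef hint]
    have := Gamma_pos_of_pos (show 0 < A + 1 by linarith)
    positivity
  -- The comparison is made on the open interval only: at `x = 1` the series may diverge.
  calc ∫ x in (0 : ℝ)..1, x ^ n / exp (logSeries u x)
      ≤ ∫ x in (0 : ℝ)..1, (x ^ n + (2 * (n + 1)) ^ A * (x ^ n * (1 - x) ^ A)) / E :=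
        integral_mono_on_of_le_Ioo zero_le_one hint
          ((((continuous_pow n).add (hB.const_mul _)).div_const E).intervalIntegrable 0 1)
          fun x hx => pow_div_exp_logSeries_le hu₀ huA n hx
    _ = (((n : ℝ) + 1)⁻¹ + (2 * (n + 1)) ^ A * ∫ x in (0 : ℝ)..1, x ^ n * (1 - x) ^ A) / E := by
        rw [intervalIntegral.integral_div, intervalIntegral.integral_add, integral_pow,
          intervalIntegral.integral_const_mul]
        · simp
        · exact intervalIntegral.intervalIntegrable_pow n
        · exact (hB.const_mul _).intervalIntegrable 0 1
    _ ≤ (((n : ℝ) + 1)⁻¹ + (2 * (n + 1)) ^ A *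
          (exp 1 * Gamma (A + 1) / ((n : ℝ) + 1) ^ (A + 1))) / E := by
        gcongr
        exact integral_pow_mul_one_sub_rpow_le (by linarith) n
    _ = _ := by
        rw [mul_rpow zero_le_two hn.le, rpow_add_one hn.ne']
        field_simp

end logSeries

/-- For `u(x) = exp(∑ u_k x^k / k)` with `0 ≤ u_k ≤ A` there is `C = C(A)`
with `∫₀¹ x^{j−1}/u(x) dx ≤ C/(j u(e^{-1/j}))` for all `j ≥ 1`. -/
theorem stmt_8 (A : ℝ) (hA : 0 ≤ A) :
    ∃ C : ℝ, 0 < C ∧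
      ∀ (u : ℕ → ℝ), (∀ k : ℕ, 1 ≤ k → 0 ≤ u k ∧ u k ≤ A) →
        ∀ j : ℕ, 1 ≤ j →
          (∫ x in (0 : ℝ)..1,
              x ^ (j - 1) / Real.exp (∑' k : ℕ, u (k + 1) * x ^ (k + 1) / ((k : ℝ) + 1)))
            ≤ C / ((j : ℝ) *
              Real.exp (∑' k : ℕ,
                u (k + 1) * Real.exp (-1 / (j : ℝ)) ^ (k + 1) / ((k : ℝ) + 1))) := by
  have hΓ : 0 < Gamma (A + 1) := Gamma_pos_of_pos (by linarith)
  refine ⟨1 + 2 ^ A * exp 1 * Gamma (A + 1), by positivity, fun u hu j hj => ?_⟩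
  obtain ⟨n, rfl⟩ := Nat.exists_eq_add_of_le' hj
  have := integral_pow_div_exp_logSeries_le (fun k => (hu (k + 1) k.succ_pos).1)
    (fun k => (hu (k + 1) k.succ_pos).2) n
  rwa [Nat.add_sub_cancel, Nat.cast_add_one]
end

section
/- Let p_n = [z^n]exp(Σ_{k≥1} d_k z^k/k) with 0 < d⁻ ≤ d_k ≤ d⁺, and fix ε ≥ 0 and q ≥ 1 with q(d⁻−1) − ε > −1. Then there is a constant C = C(d⁻,d⁺,q,ε) such that Σ_{j=1}^n j^{−ε} p_j^q ≤ C n^{1−ε} p_n^q for all n ≥ 1. -/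
/-!
Comparing coefficients in `F' = (∑ d (k+1) z^k) F` for `F = exp (∑ d k z^k / k)` gives
`(n + 1) p (n + 1) = ∑_{k ≤ n} d (k + 1) p (n - k)`, hence `d⁻ S n ≤ n p n ≤ d⁺ S n` for the
partial sums `S n = p 0 + ⋯ + p (n - 1)`. The lower bound gives `S (n + 1) ≥ (1 + d⁻ / n) S n`,
so `S n / (n + d⁻) ^ d⁻` is nondecreasing; combined with both bounds this yields
`p j ≤ C p n (j / n) ^ (d⁻ - 1)` for `1 ≤ j ≤ n`. Raising to the power `q` and summing reduces the
claim to `∑_{j ≤ n} j ^ α = O(n ^ (α + 1))` for `α = q (d⁻ - 1) - ε > -1`.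
-/

open Filter Topology Finset

theorem summable_abs_mul_nat_pow_mul_pow {a : ℕ → ℝ} {r x : ℝ}
    (ha : Summable fun n => a n * r ^ n) (hx : |x| < r) (k : ℕ) :
    Summable fun n => |a n| * (n : ℝ) ^ k * |x| ^ n := by
  have hr : 0 < r := (abs_nonneg x).trans_lt hx
  obtain ⟨K, hK⟩ := ha.tendsto_atTop_zero.norm.bddAbove_range
  have hs : ‖|x| / r‖ < 1 := by
    rwa [Real.norm_eq_abs, abs_div, abs_abs, abs_of_pos hr, div_lt_one hr]
  refine .of_nonneg_of_le (fun n => by positivity) (fun n => ?_)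
    ((summable_pow_mul_geometric_of_norm_lt_one k hs).mul_left K)
  have hn : |a n| * r ^ n ≤ K := by
    simpa [abs_mul, abs_pow, abs_of_pos hr] using hK ⟨n, rfl⟩
  calc |a n| * (n : ℝ) ^ k * |x| ^ n = (|a n| * r ^ n) * ((n : ℝ) ^ k * (|x| / r) ^ n) := by
        rw [div_pow]; field_simp
    _ ≤ K * ((n : ℝ) ^ k * (|x| / r) ^ n) := by gcongr

theorem exists_hasDerivAt_tsum_mul_pow {a : ℕ → ℝ} {r x : ℝ}
    (ha : Summable fun n => a n * r ^ n) (hx : |x| < r) :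
    ∃ D, HasSum (fun n => a (n + 1) * (n + 1) * x ^ n) D ∧
      HasDerivAt (fun y => ∑' n, a n * y ^ n) D x := by
  obtain ⟨ρ, hxρ, hρr⟩ := exists_between hx
  have hρ : 0 < ρ := (abs_nonneg x).trans_lt hxρ
  have hu := (summable_abs_mul_nat_pow_mul_pow ha (x := ρ) (by rwa [abs_of_pos hρ]) 1).div_const ρ
  have hbound : ∀ n, ∀ y ∈ Set.Ioo (-ρ) ρ,
      ‖a n * (n * y ^ (n - 1))‖ ≤ |a n| * (n : ℝ) ^ 1 * |ρ| ^ n / ρ := by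
    rintro (_ | n) y hy
    · simp
    have hy : |y| ≤ ρ := abs_le.mpr ⟨hy.1.le, hy.2.le⟩
    calc ‖a (n + 1) * ((n + 1 : ℕ) * y ^ (n + 1 - 1))‖
        = |a (n + 1)| * (n + 1 : ℕ) * |y| ^ n := by
          rw [Real.norm_eq_abs, abs_mul, abs_mul, abs_pow, Nat.add_sub_cancel, Nat.abs_cast]; ring
      _ ≤ |a (n + 1)| * (n + 1 : ℕ) * ρ ^ n := by gcongr
      _ = |a (n + 1)| * ((n + 1 : ℕ) : ℝ) ^ 1 * |ρ| ^ (n + 1) / ρ := by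
          rw [abs_of_pos hρ]; field_simp; ring
  have hx' : x ∈ Set.Ioo (-ρ) ρ := abs_lt.mp hxρ
  have hsum : Summable fun n => a (n + 1) * (((n + 1 : ℕ) : ℝ) * x ^ (n + 1 - 1)) :=
    (summable_nat_add_iff 1).mpr (hu.of_norm_bounded (hbound · x hx'))
  refine ⟨∑' n, a (n + 1) * (((n + 1 : ℕ) : ℝ) * x ^ (n + 1 - 1)), ?_, ?_⟩
  · convert hsum.hasSum using 2 with n
    rw [Nat.add_sub_cancel, Nat.cast_succ]; ring
  have hd := hasDerivAt_tsum_of_isPreconnected hu isOpen_Ioo isPreconnected_Ioo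
    (fun n y _ => (hasDerivAt_pow n y).const_mul (a n)) hbound
    (show (0 : ℝ) ∈ Set.Ioo (-ρ) ρ from ⟨by linarith, hρ⟩)
    (summable_of_ne_finset_zero (s := {0}) (by simp +contextual)) hx'
  rw [tsum_eq_zero_add' (f := fun n => a n * ((n : ℝ) * x ^ (n - 1))) hsum] at hd
  simpa using hd

/-- Only values on `(0, r)` are available, so this goes through the isolated zeros principle for
the analytic function `∑ (a n - b n) x ^ n` rather than through uniqueness of power series. -/
theorem eq_of_hasSum_mul_pow {a b : ℕ → ℝ} {f : ℝ → ℝ} {r : ℝ} (hr : 0 < r)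
    (ha : ∀ x ∈ Set.Ioo 0 r, HasSum (fun n => a n * x ^ n) (f x))
    (hb : ∀ x ∈ Set.Ioo 0 r, HasSum (fun n => b n * x ^ n) (f x)) : a = b := by
  set P := FormalMultilinearSeries.ofScalars ℝ (a - b)
  have he : ∀ x ∈ Set.Ioo 0 r, HasSum (fun n => (a - b) n * x ^ n) 0 := fun x hx => by
    simpa [sub_mul] using (ha x hx).sub (hb x hx)
  have hr2 : r / 2 ∈ Set.Ioo 0 r := ⟨by positivity, by linarith⟩
  have hrad : (((r / 2).toNNReal : NNReal) : ENNReal) ≤ P.radius := by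
    refine P.le_radius_of_tendsto (l := 0) ?_
    simpa [P, FormalMultilinearSeries.ofScalars_norm, abs_pow, abs_of_pos hr, hr2.1.le]
      using (he _ hr2).summable.tendsto_atTop_zero.norm
  have hP : HasFPowerSeriesAt P.sum P 0 :=
    (P.hasFPowerSeriesOnBall (lt_of_lt_of_le (by simpa using hr2.1) hrad)).hasFPowerSeriesAt
  have hzero : ∀ x ∈ Set.Ioo 0 r, P.sum x = 0 := fun x hx => by
    change FormalMultilinearSeries.ofScalarsSum (a - b) x = 0
    simpa [FormalMultilinearSeries.ofScalars_sum_eq] using (he x hx).tsum_eq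
  have hloc : P.sum =ᶠ[𝓝 0] 0 := by
    refine hP.analyticAt.eventually_eq_zero_or_eventually_ne_zero.resolve_right fun hne => ?_
    obtain ⟨x, hne, hx⟩ :=
      ((hne.filter_mono (nhdsGT_le_nhdsNE 0)).and (Ioo_mem_nhdsGT hr)).exists
    exact hne (hzero x hx)
  exact sub_eq_zero.mp
    ((FormalMultilinearSeries.ofScalars_series_eq_zero ℝ).mp (hP.eq_zero_of_eventually hloc))

/-- The coefficientwise form of `F' = (∑ d (k + 1) z ^ k) F`, i.e. of
`F = p 0 * exp (∑ d k z ^ k / k)` for `F = ∑ p n z ^ n`. -/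
def HasExpRecurrence (d p : ℕ → ℝ) : Prop :=
  ∀ n : ℕ, ((n : ℝ) + 1) * p (n + 1) = ∑ k ∈ range (n + 1), d (k + 1) * p (n - k)

theorem HasExpRecurrence.of_hasSum_exp {d p : ℕ → ℝ} {B : ℝ} (hd : ∀ k, |d (k + 1)| ≤ B)
    (hps : ∀ x : ℝ, 0 ≤ x → x < 1 → HasSum (fun n => p n * x ^ n)
      (Real.exp (∑' k : ℕ, d (k + 1) * x ^ (k + 1) / ((k : ℝ) + 1)))) :
    HasExpRecurrence d p := by
  intro n
  -- `c 0 = d 0 / 0 = 0`, so `G` is the exponent appearing in `hps`.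
  set c : ℕ → ℝ := fun n => d n / n
  set F : ℝ → ℝ := fun y => ∑' n, p n * y ^ n
  set G : ℝ → ℝ := fun y => ∑' n, c n * y ^ n
  have hdx : ∀ x ∈ Set.Ico (0 : ℝ) 1, Summable fun k => ‖d (k + 1) * x ^ k‖ := fun x hx =>
    .of_nonneg_of_le (fun _ => norm_nonneg _)
      (fun k => by
        rw [norm_mul, norm_pow, Real.norm_of_nonneg hx.1, Real.norm_eq_abs]
        exact mul_le_mul_of_nonneg_right (hd k) (pow_nonneg hx.1 k))
      ((summable_geometric_of_lt_one hx.1 hx.2).mul_left B)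
  have hc : ∀ x ∈ Set.Ico (0 : ℝ) 1, Summable fun n => c n * x ^ n := by
    intro x hx
    refine (summable_nat_add_iff 1).mp (.of_norm_bounded ((hdx x hx).mul_right x) fun k => ?_)
    have hk : (1 : ℝ) ≤ k + 1 := by linarith [k.cast_nonneg (α := ℝ)]
    calc ‖c (k + 1) * x ^ (k + 1)‖ = ‖d (k + 1) * x ^ k‖ * x / (k + 1) := by
          rw [norm_mul, norm_mul, norm_div, norm_pow, norm_pow, Real.norm_of_nonneg hx.1,
            Real.norm_of_nonneg (Nat.cast_nonneg _), Nat.cast_succ, pow_succ]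
          ring
      _ ≤ ‖d (k + 1) * x ^ k‖ * x := div_le_self (by positivity [hx.1]) hk
  have hFG : ∀ x ∈ Set.Ico (0 : ℝ) 1, F x = Real.exp (G x) := by
    intro x hx
    change ∑' n, p n * x ^ n = Real.exp (∑' n, c n * x ^ n)
    rw [(hps x hx.1 hx.2).tsum_eq,
      tsum_eq_zero_add' (f := fun n => c n * x ^ n) ((summable_nat_add_iff 1).mpr (hc x hx))]
    simp [c, mul_div_right_comm]
  have hderiv : ∀ x ∈ Set.Ioo (0 : ℝ) 1,
      HasSum (fun n : ℕ => ((n : ℝ) + 1) * p (n + 1) * x ^ n) (deriv F x) ∧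
      HasSum (fun n => (∑ k ∈ range (n + 1), d (k + 1) * p (n - k)) * x ^ n) (deriv F x) := by
    intro x hx
    have hxr : |x| < (1 + x) / 2 := by rw [abs_of_pos hx.1]; linarith [hx.2]
    have hr : (1 + x) / 2 ∈ Set.Ico (0 : ℝ) 1 := ⟨by linarith [hx.1], by linarith [hx.2]⟩
    obtain ⟨D₁, hD₁, hF⟩ := exists_hasDerivAt_tsum_mul_pow (hps _ hr.1 hr.2).summable hxr
    obtain ⟨D₂, hD₂, hG⟩ := exists_hasDerivAt_tsum_mul_pow (hc _ hr) hxr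
    have hFG' : F =ᶠ[𝓝 x] fun y => Real.exp (G y) :=
      eventually_of_mem (Ioo_mem_nhds hx.1 hx.2) fun y hy => hFG y ⟨hy.1.le, hy.2⟩
    have hD : deriv F x = Real.exp (G x) * D₂ :=
      hF.deriv.trans (hF.unique (hG.exp.congr_of_eventuallyEq hFG'))
    rw [← hF.deriv] at hD₁
    refine ⟨by convert hD₁ using 2; ring, ?_⟩
    have hD₂' : HasSum (fun k => d (k + 1) * x ^ k) D₂ := by
      convert hD₂ using 2 with k
      simp only [c]; push_cast; field_simp
    have hpx : Summable fun n => ‖p n * x ^ n‖ := by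
      simpa [abs_mul, abs_pow] using
        summable_abs_mul_nat_pow_mul_pow (hps _ hr.1 hr.2).summable hxr 0
    have hprod := hasSum_sum_range_mul_of_summable_norm (hdx x ⟨hx.1.le, hx.2⟩) hpx
    rw [hD₂'.tsum_eq] at hprod
    rw [hD, ← hFG x ⟨hx.1.le, hx.2⟩, mul_comm]
    have hterm : ∀ m, (∑ k ∈ range (m + 1), d (k + 1) * p (m - k)) * x ^ m =
        ∑ k ∈ range (m + 1), d (k + 1) * x ^ k * (p (m - k) * x ^ (m - k)) := fun m => by
      rw [sum_mul]
      refine sum_congr rfl fun k hk => ?_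
      rw [← pow_mul_pow_sub x (Nat.lt_succ_iff.mp (mem_range.mp hk))]
      ring
    simpa only [hterm] using hprod
  exact congrFun (eq_of_hasSum_mul_pow one_pos (fun x hx => (hderiv x hx).1)
    (fun x hx => (hderiv x hx).2)) n

theorem one_add_inv_rpow_le_one_add_div {a t : ℝ} (ha : 0 ≤ a) (ht : 0 < t) :
    (1 + (t + a)⁻¹) ^ a ≤ 1 + a / t := by
  have hta : 0 < t + a := by linarith
  have hlog : a / (t + a) ≤ Real.log (1 + a / t) := by
    have h := Real.one_sub_inv_le_log_of_pos (x := 1 + a / t) (by positivity)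
    have : 1 - (1 + a / t)⁻¹ = a / (t + a) := by field_simp; ring
    rwa [this] at h
  calc (1 + (t + a)⁻¹) ^ a ≤ Real.exp ((t + a)⁻¹) ^ a := by
        gcongr; linarith [Real.add_one_le_exp (t + a)⁻¹]
    _ = Real.exp (a / (t + a)) := by rw [← Real.exp_mul]; ring_nf
    _ ≤ 1 + a / t := by
        rw [← Real.exp_log (show 0 < 1 + a / t by positivity)]; exact Real.exp_le_exp.mpr hlog

theorem rpow_le_max_mul_sub_rpow {α x : ℝ} (hα : -1 < α) (hx : 1 ≤ x) :
    x ^ α ≤ max 1 (α + 1)⁻¹ * (x ^ (α + 1) - (x - 1) ^ (α + 1)) := by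
  have hx0 : 0 < x := by linarith
  have hβ : 0 < α + 1 := by linarith
  have hxα : 0 ≤ x ^ α := Real.rpow_nonneg hx0.le α
  have hsucc : x ^ (α + 1) = x ^ α * x := Real.rpow_add_one' hx0.le hβ.ne'
  rcases le_or_gt 0 α with hα0 | hα0
  · have hmono : (x - 1) ^ α ≤ x ^ α := by gcongr; linarith
    have h : x ^ α ≤ x ^ (α + 1) - (x - 1) ^ (α + 1) := by
      rw [hsucc, Real.rpow_add_one' (by linarith) hβ.ne']
      nlinarith [mul_le_mul_of_nonneg_left hmono (by linarith : (0 : ℝ) ≤ x - 1)]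
    calc x ^ α ≤ 1 * (x ^ (α + 1) - (x - 1) ^ (α + 1)) := by rw [one_mul]; exact h
      _ ≤ _ := by gcongr; exacts [hxα.trans h, le_max_left _ _]
  · have hbern : (1 + -x⁻¹) ^ (α + 1) ≤ 1 + (α + 1) * -x⁻¹ :=
      rpow_one_add_le_one_add_mul_self (by simp [inv_le_one_of_one_le₀ hx]) hβ.le (by linarith)
    have h : (α + 1) * x ^ α ≤ x ^ (α + 1) - (x - 1) ^ (α + 1) := by
      have hfac : x - 1 = x * (1 + -x⁻¹) := by field_simp; ring
      rw [hfac, Real.mul_rpow hx0.le (by simp [inv_le_one_of_one_le₀ hx])]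
      calc (α + 1) * x ^ α = x ^ (α + 1) - x ^ (α + 1) * (1 + (α + 1) * -x⁻¹) := by
            rw [hsucc]; field_simp; ring
        _ ≤ _ := by gcongr
    calc x ^ α = (α + 1)⁻¹ * ((α + 1) * x ^ α) := by field_simp
      _ ≤ (α + 1)⁻¹ * (x ^ (α + 1) - (x - 1) ^ (α + 1)) := by gcongr
      _ ≤ _ := by
          gcongr
          exacts [(by positivity : 0 ≤ (α + 1) * x ^ α).trans h, le_max_right _ _]

theorem sum_Icc_rpow_le {α : ℝ} (hα : -1 < α) (n : ℕ) :
    ∑ j ∈ Icc 1 n, (j : ℝ) ^ α ≤ max 1 (α + 1)⁻¹ * (n : ℝ) ^ (α + 1) := by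
  induction n with
  | zero => simp [Real.zero_rpow (by linarith : α + 1 ≠ 0)]
  | succ n ih =>
    rw [sum_Icc_succ_top (by omega)]
    have := rpow_le_max_mul_sub_rpow hα (by simp : (1 : ℝ) ≤ ((n + 1 : ℕ) : ℝ))
    push_cast at this ⊢
    rw [add_sub_cancel_right] at this
    linarith

namespace HasExpRecurrence

variable {d p : ℕ → ℝ}

theorem mul_sum_range_le (hrec : HasExpRecurrence d p) {c : ℝ} (hd : ∀ k, 1 ≤ k → c ≤ d k)
    (hp : ∀ j, 0 ≤ p j) {m : ℕ} (hm : 1 ≤ m) : c * ∑ j ∈ range m, p j ≤ m * p m := by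
  obtain ⟨n, rfl⟩ := Nat.exists_eq_add_of_le' hm
  rw [Nat.cast_succ, hrec n, ← sum_range_reflect p, mul_sum]
  refine sum_le_sum fun k hk => ?_
  rw [Nat.add_sub_cancel]
  exact mul_le_mul_of_nonneg_right (hd _ le_add_self) (hp _)

theorem le_mul_sum_range (hrec : HasExpRecurrence d p) {C : ℝ} (hd : ∀ k, 1 ≤ k → d k ≤ C)
    (hp : ∀ j, 0 ≤ p j) {m : ℕ} (hm : 1 ≤ m) : m * p m ≤ C * ∑ j ∈ range m, p j := by
  obtain ⟨n, rfl⟩ := Nat.exists_eq_add_of_le' hm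
  rw [Nat.cast_succ, hrec n, ← sum_range_reflect p, mul_sum]
  refine sum_le_sum fun k hk => ?_
  rw [Nat.add_sub_cancel]
  exact mul_le_mul_of_nonneg_right (hd _ le_add_self) (hp _)

theorem monotoneOn_sum_range_div_rpow (hrec : HasExpRecurrence d p) {a : ℝ} (ha : 0 ≤ a)
    (hd : ∀ k, 1 ≤ k → a ≤ d k) (hp : ∀ j, 0 ≤ p j) :
    MonotoneOn (fun m : ℕ => (∑ j ∈ range m, p j) / ((m : ℝ) + a) ^ a) (Set.Ici 1) := by
  refine monotoneOn_nat_Ici_of_le_succ fun m hm => ?_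
  have hm0 : (0 : ℝ) < m := by exact_mod_cast hm
  have hS : 0 ≤ ∑ j ∈ range m, p j := sum_nonneg fun j _ => hp j
  have hlow := hrec.mul_sum_range_le hd hp hm
  have hsplit : (m : ℝ) + 1 + a = (m + a) * (1 + (m + a)⁻¹) := by field_simp; ring
  rw [div_le_div_iff₀ (by positivity) (by positivity), sum_range_succ, Nat.cast_succ, hsplit,
    Real.mul_rpow (by positivity) (by positivity)]
  calc (∑ j ∈ range m, p j) * ((m + a) ^ a * (1 + (m + a)⁻¹) ^ a)
      = (m + a) ^ a * ((∑ j ∈ range m, p j) * (1 + (m + a)⁻¹) ^ a) := by ring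
    _ ≤ (m + a) ^ a * ((∑ j ∈ range m, p j) * (1 + a / m)) := by
        gcongr; exact one_add_inv_rpow_le_one_add_div ha hm0
    _ ≤ (m + a) ^ a * (∑ j ∈ range m, p j + p m) := by
        gcongr
        rw [mul_one_add, mul_div_assoc', add_le_add_iff_left, div_le_iff₀ hm0]
        linarith
    _ = _ := by ring

theorem coeff_le_mul_div_rpow (hrec : HasExpRecurrence d p) {a b : ℝ} (ha : 0 < a)
    (hd : ∀ k, 1 ≤ k → a ≤ d k ∧ d k ≤ b) (hp : ∀ j, 0 ≤ p j) {j n : ℕ} (hj : 1 ≤ j)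
    (hjn : j ≤ n) : p j ≤ b / a * (1 + a) ^ a * p n * ((j : ℝ) / n) ^ (a - 1) := by
  have hn : 1 ≤ n := hj.trans hjn
  have hj0 : (0 : ℝ) < j := by exact_mod_cast hj
  have hn0 : (0 : ℝ) < n := by exact_mod_cast hn
  have hb : 0 ≤ b := ha.le.trans (hd 1 le_rfl).1 |>.trans (hd 1 le_rfl).2
  have hupper := hrec.le_mul_sum_range (fun k hk => (hd k hk).2) hp hj
  have hlower := hrec.mul_sum_range_le (fun k hk => (hd k hk).1) hp hn
  have hgrowth := hrec.monotoneOn_sum_range_div_rpow ha.le (fun k hk => (hd k hk).1) hp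
    (Set.mem_Ici.mpr hj) (Set.mem_Ici.mpr hn) hjn
  have hratio : ((j : ℝ) + a) / (n + a) ≤ (1 + a) * (j / n) := by
    rw [div_le_iff₀ (by positivity), mul_div_assoc', div_mul_eq_mul_div, le_div_iff₀ hn0]
    nlinarith [mul_le_mul_of_nonneg_left (show (1 : ℝ) ≤ j by exact_mod_cast hj)
      (by positivity : 0 ≤ a * n), mul_pos ha hj0, mul_pos (mul_pos ha ha) hj0]
  have hSn : 0 ≤ ∑ i ∈ range n, p i := sum_nonneg fun i _ => hp i
  have hSj : ∑ i ∈ range j, p i ≤ (∑ i ∈ range n, p i) * (((j : ℝ) + a) / (n + a)) ^ a := by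
    rw [Real.div_rpow (by positivity) (by positivity), mul_div_assoc', le_div_iff₀ (by positivity)]
    rwa [div_le_div_iff₀ (by positivity) (by positivity)] at hgrowth
  calc p j ≤ b * (∑ i ∈ range j, p i) / j := by rw [le_div_iff₀ hj0]; linarith
    _ ≤ b * ((∑ i ∈ range n, p i) * ((1 + a) * (j / n)) ^ a) / j := by
        gcongr; exact hSj.trans (by gcongr)
    _ ≤ b * (n * p n / a * ((1 + a) * (j / n)) ^ a) / j := by
        gcongr; rw [le_div_iff₀ ha]; linarith
    _ = b / a * (1 + a) ^ a * p n * ((j : ℝ) / n) ^ (a - 1) := by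
        rw [Real.mul_rpow (by positivity) (by positivity), Real.rpow_sub_one (by positivity)]
        field_simp

theorem rpow_neg_mul_coeff_rpow_le (hrec : HasExpRecurrence d p) {a b ε q : ℝ} (ha : 0 < a)
    (hd : ∀ k, 1 ≤ k → a ≤ d k ∧ d k ≤ b) (hp : ∀ j, 0 ≤ p j) (hq : 0 ≤ q)
    {j n : ℕ} (hj : 1 ≤ j) (hjn : j ≤ n) :
    (j : ℝ) ^ (-ε) * p j ^ q ≤
      (b / a * (1 + a) ^ a * p n) ^ q / (n : ℝ) ^ (q * (a - 1)) * (j : ℝ) ^ (q * (a - 1) - ε) := by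
  have hj0 : (0 : ℝ) < j := by exact_mod_cast hj
  have hn0 : (0 : ℝ) < n := by exact_mod_cast hj.trans hjn
  have hb : 0 ≤ b := ha.le.trans (hd 1 le_rfl).1 |>.trans (hd 1 le_rfl).2
  have hpn := hp n
  calc (j : ℝ) ^ (-ε) * p j ^ q
      ≤ (j : ℝ) ^ (-ε) * (b / a * (1 + a) ^ a * p n * ((j : ℝ) / n) ^ (a - 1)) ^ q := by
        gcongr
        exacts [hp j, hrec.coeff_le_mul_div_rpow ha hd hp hj hjn]
    _ = _ := by
        rw [Real.mul_rpow (by positivity) (by positivity), ← Real.rpow_mul (by positivity),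
          mul_comm (a - 1) q, Real.div_rpow hj0.le hn0.le, sub_eq_add_neg (q * (a - 1)),
          Real.rpow_add hj0]
        ring

theorem sum_Icc_rpow_neg_mul_coeff_rpow_le (hrec : HasExpRecurrence d p) {a b ε q : ℝ}
    (ha : 0 < a) (hd : ∀ k, 1 ≤ k → a ≤ d k ∧ d k ≤ b) (hp : ∀ j, 0 ≤ p j) (hq : 0 ≤ q)
    (hα : -1 < q * (a - 1) - ε) {n : ℕ} (hn : 1 ≤ n) :
    ∑ j ∈ Icc 1 n, (j : ℝ) ^ (-ε) * p j ^ q ≤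
      (b / a * (1 + a) ^ a) ^ q * max 1 (q * (a - 1) - ε + 1)⁻¹ * (n : ℝ) ^ (1 - ε) *
        p n ^ q := by
  have hn0 : (0 : ℝ) < n := by exact_mod_cast hn
  have hb : 0 ≤ b := ha.le.trans (hd 1 le_rfl).1 |>.trans (hd 1 le_rfl).2
  have hpn := hp n
  calc ∑ j ∈ Icc 1 n, (j : ℝ) ^ (-ε) * p j ^ q
      ≤ ∑ j ∈ Icc 1 n, (b / a * (1 + a) ^ a * p n) ^ q / (n : ℝ) ^ (q * (a - 1)) *
          (j : ℝ) ^ (q * (a - 1) - ε) :=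
        sum_le_sum fun j hj =>
          hrec.rpow_neg_mul_coeff_rpow_le ha hd hp hq (mem_Icc.mp hj).1 (mem_Icc.mp hj).2
    _ ≤ (b / a * (1 + a) ^ a * p n) ^ q / (n : ℝ) ^ (q * (a - 1)) *
          (max 1 (q * (a - 1) - ε + 1)⁻¹ * (n : ℝ) ^ (q * (a - 1) - ε + 1)) := by
        rw [← mul_sum]; gcongr; exact sum_Icc_rpow_le hα n
    _ = _ := by
        rw [Real.mul_rpow (by positivity) hpn,
          show 1 - ε = q * (a - 1) - ε + 1 - q * (a - 1) by ring, Real.rpow_sub hn0]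
        ring

end HasExpRecurrence

theorem stmt_17_general (dm dp : ℝ) (hdm : 0 < dm) (hdp : dm ≤ dp)
    (ε q : ℝ) (hq : 1 ≤ q) (hqε : -1 < q * (dm - 1) - ε) :
    ∃ C : ℝ, 0 < C ∧
      ∀ (d : ℕ → ℝ), (∀ k : ℕ, 1 ≤ k → dm ≤ d k ∧ d k ≤ dp) →
      ∀ (p : ℕ → ℝ), (∀ j, 0 < p j) →
        (∀ x : ℝ, 0 ≤ x → x < 1 →
          HasSum (fun n => p n * x ^ n)
            (Real.exp (∑' k : ℕ, d (k + 1) * x ^ (k + 1) / ((k : ℝ) + 1)))) →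
        ∀ n : ℕ, 1 ≤ n →
          ∑ j ∈ Finset.Icc 1 n, (j : ℝ) ^ (-ε) * p j ^ q
            ≤ C * (n : ℝ) ^ (1 - ε) * p n ^ q := by
  have hdp₀ : 0 < dp := hdm.trans_le hdp
  refine ⟨(dp / dm * (1 + dm) ^ dm) ^ q * max 1 (q * (dm - 1) - ε + 1)⁻¹, by positivity,
    fun d hd p hp hps n hn => ?_⟩
  have hdB : ∀ k, |d (k + 1)| ≤ dp := fun k =>
    (abs_of_pos (hdm.trans_le (hd _ le_add_self).1)).trans_le (hd _ le_add_self).2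
  exact (HasExpRecurrence.of_hasSum_exp hdB hps).sum_Icc_rpow_neg_mul_coeff_rpow_le hdm hd
    (fun j => (hp j).le) (by linarith) hqε hn

/-- For the coefficients `p_j` of `exp(∑ d_k z^k/k)` and `ε ≥ 0`, `q ≥ 1`
with `q(d⁻−1) − ε > −1`: `∑_{j=1}^n j^{−ε} p_j^q ≤ C(d⁻,d⁺,q,ε) n^{1−ε} p_n^q`. -/
theorem stmt_17 (dm dp : ℝ) (hdm : 0 < dm) (hdp : dm ≤ dp)
    (ε q : ℝ) (hε : 0 ≤ ε) (hq : 1 ≤ q) (hqε : -1 < q * (dm - 1) - ε) :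
    ∃ C : ℝ, 0 < C ∧
      ∀ (d : ℕ → ℝ), (∀ k : ℕ, 1 ≤ k → dm ≤ d k ∧ d k ≤ dp) →
      ∀ (p : ℕ → ℝ), (∀ j, 0 < p j) →
        (∀ x : ℝ, 0 ≤ x → x < 1 →
          HasSum (fun n => p n * x ^ n)
            (Real.exp (∑' k : ℕ, d (k + 1) * x ^ (k + 1) / ((k : ℝ) + 1)))) →
        ∀ n : ℕ, 1 ≤ n →
          ∑ j ∈ Finset.Icc 1 n, (j : ℝ) ^ (-ε) * p j ^ q
            ≤ C * (n : ℝ) ^ (1 - ε) * p n ^ q :=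
  stmt_17_general dm dp hdm hdp ε q hq hqε
end
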